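/- For n ≥ 0 define Z_n := (1/n!) · Σ_{σ ∈ S_n} 2^{-c(σ)} (so Z_0 = 1). Then for every n ≥ 2: Z_n = Z_{n−1} − Z_{n−2}/(2n). -/

import Mathlib

open scoped BigOperators

/-- `Z_n = (1/n!) · Σ_{σ ∈ S_n} 2^{-c(σ)}`, where `c(σ)` is the number of cycles of `σ`
of length greater than one (the cardinality of the cycle type of `σ`). -/
noncomputable def Zseq (n : ℕ) : ℝ :=
  (Nat.factorial n : ℝ)⁻¹ *
    ∑ σ : Equiv.Perm (Fin n), ((2 : ℝ) ^ σ.cycleType.card)⁻¹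

section Aux

open Equiv Equiv.Perm


variable {α : Type*} [DecidableEq α] [Fintype α]

/-- Inserting a fixed point `a` into the cycle of `b` via a swap yields a cycle. -/
lemma isCycle_swap_mul_of_fixed {f : Perm α} (hf : f.IsCycle) {a b : α}
    (ha : f a = a) (hb : f b ≠ b) : (Equiv.swap a b * f).IsCycle := by
  have hab : a ≠ b := fun h => hb (h ▸ ha)
  have hτa : (Equiv.swap a b * f) a = b := by
    simp [ha, Equiv.swap_apply_left]
  have hamem : a ∉ f.support := by simp [ha]
  have key : ∀ k : ℕ, SameCycle (Equiv.swap a b * f) a ((f ^ k) b) := by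
    intro k
    induction k with
    | zero => exact ⟨1, by simpa using hτa⟩
    | succ k ih =>
      by_cases hfb : (f ^ (k + 1)) b = b
      · rw [hfb]; exact ⟨1, by simpa using hτa⟩
      · have hmem : (f ^ (k + 1)) b ∈ f.support :=
          pow_apply_mem_support.2 (mem_support.2 hb)
        have hne_a : (f ^ (k + 1)) b ≠ a := fun h => hamem (h ▸ hmem)
        have hstep : (Equiv.swap a b * f) ((f ^ k) b) = (f ^ (k + 1)) b := by
          have : f ((f ^ k) b) = (f ^ (k + 1)) b := by
            rw [← Equiv.Perm.mul_apply, ← pow_succ']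
          rw [Equiv.Perm.mul_apply, this, Equiv.swap_apply_of_ne_of_ne hne_a hfb]
        exact ih.trans ⟨1, by simpa using hstep⟩
  refine ⟨a, by rw [hτa]; exact hab.symm, fun y hy => ?_⟩
  by_cases hya : y = a
  · exact hya ▸ SameCycle.refl _ _
  by_cases hyb : y = b
  · subst hyb; exact ⟨1, by simpa using hτa⟩
  have hfy : f y ≠ y := by
    intro h
    apply hy
    rw [Equiv.Perm.mul_apply, h, Equiv.swap_apply_of_ne_of_ne hya hyb]
  obtain ⟨i, hi⟩ := hf.exists_pow_eq hb hfy
  exact hi ▸ key i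

lemma card_cycleType_swap_mul (g : Perm α) {a b : α} (ha : g a = a) (hab : a ≠ b) :
    (Equiv.swap a b * g).cycleType.card =
      if g b = b then g.cycleType.card + 1 else g.cycleType.card := by
  have hag : a ∉ g.support := by simp [ha]
  split_ifs with hb
  · -- swap and g are disjoint
    have hd : (Equiv.swap a b).Disjoint g := by
      intro x
      by_cases hxa : x = a
      · subst hxa; exact Or.inr ha
      by_cases hxb : x = b
      · subst hxb; exact Or.inr hb
      · exact Or.inl (Equiv.swap_apply_of_ne_of_ne hxa hxb)
    rw [Equiv.Perm.Disjoint.cycleType_mul hd, (Equiv.Perm.isCycle_swap hab).cycleType]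
    simp [add_comm]
  · -- merge: g = d * f with f the cycle of b
    set f := g.cycleOf b with hf_def
    have hfmem : f ∈ g.cycleFactorsFinset := cycleOf_mem_cycleFactorsFinset_iff.2 (mem_support.2 hb)
    have hdisj : (g * f⁻¹).Disjoint f := disjoint_mul_inv_of_mem_cycleFactorsFinset hfmem
    set d := g * f⁻¹ with hd_def
    have hgdf : g = d * f := by rw [hd_def, inv_mul_cancel_right]
    have hsupf : f.support ⊆ g.support := support_cycleOf_le g b
    have hsupd : d.support ⊆ g.support := by
      rw [hgdf, hdisj.support_mul]; exact Finset.subset_union_left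
    have hfa : f a = a := notMem_support.1 fun h => (notMem_support.2 ha) (hsupf h)
    have hfb : f b ≠ b := by rw [hf_def, cycleOf_apply_self]; exact hb
    have hfcyc : f.IsCycle := isCycle_cycleOf g hb
    have hbd : d b = b := by
      rcases hdisj b with h | h
      · exact h
      · exact absurd h hfb
    have hda : d a = a := notMem_support.1 fun h => (notMem_support.2 ha) (hsupd h)
    have hτcyc : (Equiv.swap a b * f).IsCycle := isCycle_swap_mul_of_fixed hfcyc hfa hfb
    -- d commutes with swap a b
    have hcomm : (Equiv.swap a b).Disjoint d := by
      intro x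
      by_cases hxa : x = a
      · subst hxa; exact Or.inr hda
      by_cases hxb : x = b
      · subst hxb; exact Or.inr hbd
      · exact Or.inl (Equiv.swap_apply_of_ne_of_ne hxa hxb)
    have hdisj2 : d.Disjoint (Equiv.swap a b * f) := by
      intro x
      by_cases hdx : d x = x
      · exact Or.inl hdx
      · right
        have hx : x ∉ f.support := fun h => (hdisj x).elim (fun h' => hdx h') (fun h' =>
          notMem_support.2 h' h)
        have hxa : x ≠ a := fun h => hdx (h ▸ hda)
        have hxb : x ≠ b := fun h => hdx (h ▸ hbd)
        rw [Equiv.Perm.mul_apply, notMem_support.1 hx, Equiv.swap_apply_of_ne_of_ne hxa hxb]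
    have heq : d * (Equiv.swap a b * f) = Equiv.swap a b * g := by
      rw [← mul_assoc, ← hcomm.commute.eq, mul_assoc, ← hgdf]
    rw [← heq, Equiv.Perm.Disjoint.cycleType_mul hdisj2, hτcyc.cycleType, hgdf,
      Equiv.Perm.Disjoint.cycleType_mul hdisj, hfcyc.cycleType]
    simp

lemma decomposeFin_symm_zero_cycleType {n : ℕ} (e : Perm (Fin n)) :
    (Equiv.Perm.decomposeFin.symm (0, e)).cycleType = e.cycleType := by
  have : Equiv.Perm.decomposeFin.symm (0, e) = e.extendDomain (finSuccAboveEquiv 0) := by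
    apply Equiv.ext
    intro x
    refine Fin.cases ?_ (fun j => ?_) x
    · rw [Equiv.Perm.decomposeFin_symm_apply_zero]
      rw [Equiv.Perm.extendDomain_apply_not_subtype]
      simp
    · rw [Equiv.Perm.decomposeFin_symm_apply_succ]
      have hj : (j.succ : Fin (n+1)) ≠ 0 := Fin.succ_ne_zero j
      rw [e.extendDomain_apply_subtype (finSuccAboveEquiv 0) hj]
      have h1 : (finSuccAboveEquiv (0 : Fin (n+1))).symm ⟨j.succ, hj⟩ = j := by
        rw [Equiv.symm_apply_eq]
        ext
        simp [finSuccAboveEquiv_apply, Fin.zero_succAbove]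
      rw [h1]
      simp [finSuccAboveEquiv_apply, Fin.zero_succAbove]
  rw [this, cycleType_extendDomain]

lemma decomposeFin_symm_succ_eq {n : ℕ} (j : Fin n) (e : Perm (Fin n)) :
    Equiv.Perm.decomposeFin.symm (j.succ, e) =
      Equiv.swap 0 j.succ * Equiv.Perm.decomposeFin.symm (0, e) := by
  ext x
  refine Fin.cases ?_ (fun i => ?_) x
  · simp
  · simp [Equiv.swap_apply_of_ne_of_ne (Fin.succ_ne_zero _).symm]

noncomputable def Wseq (n : ℕ) : ℝ :=
  ∑ σ : Equiv.Perm (Fin n), ((2 : ℝ) ^ σ.cycleType.card)⁻¹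

lemma decomposeFin_succ_card {n : ℕ} (j : Fin n) (e : Perm (Fin n)) :
    (Equiv.Perm.decomposeFin.symm (j.succ, e)).cycleType.card =
      if e j = j then e.cycleType.card + 1 else e.cycleType.card := by
  rw [decomposeFin_symm_succ_eq]
  have h0 : Equiv.Perm.decomposeFin.symm (0, e) 0 = 0 :=
    Equiv.Perm.decomposeFin_symm_apply_zero 0 e
  rw [card_cycleType_swap_mul _ h0 (Fin.succ_ne_zero j).symm]
  have hb : Equiv.Perm.decomposeFin.symm (0, e) j.succ = (e j).succ := by
    rw [Equiv.Perm.decomposeFin_symm_apply_succ]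
    simp
  rw [hb, decomposeFin_symm_zero_cycleType]
  simp [Fin.succ_inj]

lemma sum_fix_zero {m : ℕ} :
    ∑ e : Perm (Fin (m + 1)), (if e 0 = 0 then ((2:ℝ) ^ e.cycleType.card)⁻¹ else 0)
      = Wseq m := by
  rw [← Equiv.sum_comp Equiv.Perm.decomposeFin.symm
    (fun σ : Perm (Fin (m+1)) => if σ 0 = 0 then ((2:ℝ) ^ σ.cycleType.card)⁻¹ else 0),
    Fintype.sum_prod_type, Fin.sum_univ_succ]
  have h1 : ∀ e : Perm (Fin m),
      (if Equiv.Perm.decomposeFin.symm ((0 : Fin (m+1)), e) 0 = 0 then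
        ((2:ℝ) ^ (Equiv.Perm.decomposeFin.symm ((0 : Fin (m+1)), e)).cycleType.card)⁻¹ else 0)
      = ((2:ℝ) ^ e.cycleType.card)⁻¹ := by
    intro e
    rw [Equiv.Perm.decomposeFin_symm_apply_zero, if_pos rfl, decomposeFin_symm_zero_cycleType]
  have h2 : ∀ (j : Fin m) (e : Perm (Fin m)),
      (if Equiv.Perm.decomposeFin.symm (j.succ, e) 0 = 0 then
        ((2:ℝ) ^ (Equiv.Perm.decomposeFin.symm (j.succ, e)).cycleType.card)⁻¹ else 0) = 0 := by
    intro j e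
    rw [Equiv.Perm.decomposeFin_symm_apply_zero, if_neg (Fin.succ_ne_zero j)]
  simp only [h1, h2, Finset.sum_const_zero, add_zero]
  rfl

lemma sum_fix {m : ℕ} (j : Fin (m + 1)) :
    ∑ e : Perm (Fin (m + 1)), (if e j = j then ((2:ℝ) ^ e.cycleType.card)⁻¹ else 0)
      = Wseq m := by
  rw [← sum_fix_zero]
  rw [← Equiv.sum_comp (Equiv.mulLeft (Equiv.swap (0 : Fin (m+1)) j) |>.trans
      (Equiv.mulRight (Equiv.swap (0 : Fin (m+1)) j)))
    (fun σ : Perm (Fin (m+1)) => if σ j = j then ((2:ℝ) ^ σ.cycleType.card)⁻¹ else 0)]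
  apply Finset.sum_congr rfl
  intro e _
  have hconj : (Equiv.swap (0 : Fin (m+1)) j * e * Equiv.swap (0 : Fin (m+1)) j).cycleType
      = e.cycleType := by
    nth_rewrite 2 [← Equiv.swap_inv (0 : Fin (m+1)) j]
    exact cycleType_conj
  have happly : (Equiv.swap (0 : Fin (m+1)) j * e * Equiv.swap (0 : Fin (m+1)) j) j
      = Equiv.swap (0 : Fin (m+1)) j (e 0) := by
    simp [Equiv.Perm.mul_apply]
  have hiff : Equiv.swap (0 : Fin (m+1)) j (e 0) = j ↔ e 0 = 0 := by
    rw [← Equiv.swap_apply_left (0 : Fin (m+1)) j]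
    exact (Equiv.swap (0 : Fin (m+1)) j).apply_eq_iff_eq
  simp only [Equiv.trans_apply, Equiv.coe_mulLeft, Equiv.coe_mulRight]
  simp only [happly, hconj, hiff]

lemma Wseq_rec (m : ℕ) :
    Wseq (m + 2) = (m + 2) * Wseq (m + 1) - ((m + 1) / 2) * Wseq m := by
  have step : ∀ j : Fin (m + 1), (∑ e : Perm (Fin (m + 1)),
      ((2:ℝ) ^ (Equiv.Perm.decomposeFin.symm (j.succ, e)).cycleType.card)⁻¹)
      = Wseq (m + 1) - Wseq m / 2 := by
    intro j
    have he : ∀ e : Perm (Fin (m + 1)),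
        ((2:ℝ) ^ (Equiv.Perm.decomposeFin.symm (j.succ, e)).cycleType.card)⁻¹
        = ((2:ℝ) ^ e.cycleType.card)⁻¹
            - (1/2) * (if e j = j then ((2:ℝ) ^ e.cycleType.card)⁻¹ else 0) := by
      intro e
      rw [decomposeFin_succ_card]
      split_ifs with h
      · rw [pow_succ]
        have : (2:ℝ) ^ e.cycleType.card ≠ 0 := by positivity
        field_simp
        ring
      · ring
    rw [Finset.sum_congr rfl (fun e _ => he e), Finset.sum_sub_distrib, ← Finset.mul_sum,
      sum_fix j]
    unfold Wseq
    ring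
  have main : Wseq (m + 2) = Wseq (m + 1) + (m + 1) * (Wseq (m + 1) - Wseq m / 2) := by
    unfold Wseq
    rw [← Equiv.sum_comp Equiv.Perm.decomposeFin.symm
      (fun σ : Perm (Fin (m + 2)) => ((2:ℝ) ^ σ.cycleType.card)⁻¹),
      Fintype.sum_prod_type, Fin.sum_univ_succ]
    congr 1
    · apply Finset.sum_congr rfl
      intro e _
      rw [decomposeFin_symm_zero_cycleType]
    · rw [Finset.sum_congr rfl (fun j _ => step j), Finset.sum_const, Finset.card_univ,
        Fintype.card_fin, nsmul_eq_mul]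
      unfold Wseq
      push_cast
      ring
  rw [main]
  push_cast
  ring

theorem Zseq_rec' (m : ℕ) :
    (Nat.factorial (m+2) : ℝ)⁻¹ * Wseq (m+2)
      = (Nat.factorial (m+1) : ℝ)⁻¹ * Wseq (m+1)
        - ((Nat.factorial m : ℝ)⁻¹ * Wseq m) / (2 * (m+2)) := by
  have h2 : (Nat.factorial (m+2) : ℝ) = (m+2) * (m+1) * Nat.factorial m := by
    rw [Nat.factorial_succ, Nat.factorial_succ]
    push_cast
    ring
  have h1 : (Nat.factorial (m+1) : ℝ) = (m+1) * Nat.factorial m := by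
    rw [Nat.factorial_succ]; push_cast; ring
  have hm : (Nat.factorial m : ℝ) ≠ 0 := Nat.cast_ne_zero.2 (Nat.factorial_ne_zero m)
  have hm1 : (m : ℝ) + 1 ≠ 0 := by positivity
  have hm2 : (m : ℝ) + 2 ≠ 0 := by positivity
  rw [Wseq_rec, h1, h2]
  field_simp

lemma Zseq_eq (n : ℕ) : Zseq n = (Nat.factorial n : ℝ)⁻¹ * Wseq n := rfl

end Aux

/-- for all `n ≥ 2`, `Z_n = Z_{n−1} − Z_{n−2}/(2n)`. -/
theorem Zseq_two_step_recursion (n : ℕ) (hn : 2 ≤ n) :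
    Zseq n = Zseq (n - 1) - Zseq (n - 2) / (2 * n) := by
  obtain ⟨m, rfl⟩ : ∃ m, n = m + 2 := ⟨n - 2, by omega⟩
  have h1 : m + 2 - 1 = m + 1 := rfl
  have h2 : m + 2 - 2 = m := rfl
  rw [h1, h2, Zseq_eq, Zseq_eq, Zseq_eq]
  have := Zseq_rec' m
  push_cast at this ⊢
  linarith [this]
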